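/- Let p be a prime, let A be a θ^p-ring, let e ≥ 1, and let a ∈ A satisfy p^e·a = 0. Then for every k with 0 ≤ k ≤ e one has p^{e−k}·ψ^{p^k}(a) = 0. -/
import Mathlib

/-- Explicit value of `θ` on natural numbers. -/
def thetaC (p : ℕ) : ℕ → ℕ
  | 0 => 0
  | n+1 => thetaC p n + ∑ j ∈ Finset.Ioo 0 p, (p.choose j / p) * n ^ j

lemma thetaC_spec (p : ℕ) (hp : p.Prime) (n : ℕ) : p * thetaC p n + n = n ^ p := by
  induction n with
  | zero => simp [thetaC, zero_pow hp.ne_zero]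
  | succ n ih =>
    have hsplit : ∀ f : ℕ → ℕ, ∑ k ∈ Finset.range (p+1), f k =
        f 0 + (∑ k ∈ Finset.Ioo 0 p, f k) + f p := by
      intro f
      rw [Finset.sum_range_succ]
      congr 1
      rw [Finset.range_eq_Ico, ← Finset.Ioo_insert_left hp.pos,
        Finset.sum_insert (by simp)]
    have hpow : (n+1) ^ p = ∑ k ∈ Finset.range (p+1), n ^ k * p.choose k := by
      have := add_pow n 1 p
      simpa using this
    rw [hpow, hsplit (fun k => n ^ k * p.choose k)]
    simp only [thetaC]
    rw [Nat.mul_add, Finset.mul_sum]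
    have hterm : ∀ j ∈ Finset.Ioo 0 p, p * (p.choose j / p * n ^ j) = n ^ j * p.choose j := by
      intro j hj
      simp only [Finset.mem_Ioo] at hj
      rw [← mul_assoc, Nat.mul_div_cancel' (hp.dvd_choose_self (by omega) hj.2)]
      ring
    rw [Finset.sum_congr rfl hterm]
    simp [Nat.pow_zero, Nat.choose_zero_right, Nat.choose_self]
    omega

lemma thetaC_self (p : ℕ) (hp : p.Prime) : thetaC p p = p ^ (p-1) - 1 := by
  have h := thetaC_spec p hp p
  have hX : p * (thetaC p p + 1) = p * p ^ (p-1) := by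
    rw [Nat.mul_add, Nat.mul_one, ← pow_succ', Nat.sub_add_cancel hp.one_lt.le]
    exact h
  have := Nat.eq_of_mul_eq_mul_left hp.pos hX
  omega

/-- A `θ^p`-ring: a commutative ring `A` equipped with maps `θ ψ : A → A` such that
`ψ` is a ring homomorphism, `ψ a = a^p - p * θ a`, and `θ` satisfies the usual
identities of a `p`-typical `δ`-structure. -/
structure IsThetaRing (p : ℕ) {A : Type*} [CommRing A] (θ ψ : A → A) : Prop where
  psi_one : ψ 1 = 1
  psi_add : ∀ a b : A, ψ (a + b) = ψ a + ψ b
  psi_mul : ∀ a b : A, ψ (a * b) = ψ a * ψ b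
  psi_def : ∀ a : A, ψ a = a ^ p - (p : A) * θ a
  theta_one : θ 1 = 0
  theta_add : ∀ a b : A, θ (a + b) = θ a + θ b +
    ∑ j ∈ Finset.Ioo 0 p, ((p.choose j / p : ℕ) : A) * a ^ j * b ^ (p - j)
  theta_mul : ∀ a b : A, θ (a * b) = θ a * ψ b + a ^ p * θ b
  theta_psi : ∀ a : A, θ (ψ a) = ψ (θ a)

namespace ThetaAux

variable {p : ℕ} {A : Type*} [CommRing A] {θ ψ : A → A}

lemma psi_zero (h : IsThetaRing p θ ψ) : ψ 0 = 0 := by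
  have := h.psi_add 0 0
  simpa using this

lemma psi_natCast (h : IsThetaRing p θ ψ) (n : ℕ) : ψ (n : A) = n := by
  induction n with
  | zero => simpa using psi_zero h
  | succ n ih => push_cast; rw [h.psi_add, ih, h.psi_one]

lemma psi_natCast_pow (h : IsThetaRing p θ ψ) (n : ℕ) : ψ ((p : A) ^ n) = (p : A) ^ n := by
  rw [← Nat.cast_pow, psi_natCast h, Nat.cast_pow]

lemma theta_zero (hp : p.Prime) (h : IsThetaRing p θ ψ) : θ (0 : A) = 0 := by
  have := h.theta_mul 0 0
  simpa [psi_zero h, zero_pow hp.ne_zero] using this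

lemma theta_natCast (hp : p.Prime) (h : IsThetaRing p θ ψ) (n : ℕ) :
    θ ((n : ℕ) : A) = ((thetaC p n : ℕ) : A) := by
  induction n with
  | zero => simpa [thetaC] using theta_zero hp h
  | succ n ih =>
    have hc : ((n + 1 : ℕ) : A) = (n : A) + 1 := by push_cast; ring
    rw [hc, h.theta_add, ih, h.theta_one, thetaC]
    push_cast
    simp [one_pow]

/-- Key lemma: if `p * b = 0` then `ψ b = 0`. -/
lemma psi_eq_zero (hp : p.Prime) (h : IsThetaRing p θ ψ) {b : A} (hb : (p : A) * b = 0) :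
    ψ b = 0 := by
  have h0 : θ ((p : A) * b) = 0 := by rw [hb, theta_zero hp h]
  rw [h.theta_mul] at h0
  have hθp : θ ((p : A)) = (p : A) ^ (p-1) - 1 := by
    have hth := theta_natCast hp h p
    rw [thetaC_self p hp, Nat.cast_sub (Nat.one_le_pow _ _ hp.pos)] at hth
    rw [hth]; push_cast; ring
  rw [hθp] at h0
  have hpp : (p : A) ^ (p-1) * (p : A) = (p : A) ^ p := by
    rw [← pow_succ, Nat.sub_add_cancel hp.one_lt.le]
  have key : ψ b = (p : A) ^ (p-1) * (ψ b + (p : A) * θ b) := by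
    rw [mul_add, ← mul_assoc, hpp]
    linear_combination -h0
  have hψb : ψ b = (p : A) ^ (p-1) * b ^ p := by
    rw [key, show ψ b + (p : A) * θ b = b ^ p from by rw [h.psi_def b]; ring]
  have e1 : (p : A) ^ (p-2) * (p : A) = (p : A) ^ (p-1) := by
    rw [← pow_succ, show p-2+1 = p-1 by have := hp.two_le; omega]
  have e2 : b ^ (p-1) * b = b ^ p := by
    rw [← pow_succ, Nat.sub_add_cancel hp.one_lt.le]
  calc ψ b = (p : A) ^ (p-2) * ((p : A) * b) * b ^ (p-1) := by
        rw [hψb, ← e1, ← e2]; ring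
    _ = 0 := by rw [hb]; ring

end ThetaAux

/-- If `p^e · a = 0` then `p^{e-k} · ψ^{p^k}(a) = 0` for `0 ≤ k ≤ e`.
Here `ψ^{p^k}` is the `k`-fold iterate `ψ^[k]`. -/
theorem pow_mul_psi_iterate_eq_zero (p : ℕ) (hp : p.Prime) (A : Type*) [CommRing A]
    (θ ψ : A → A) (h : IsThetaRing p θ ψ) (e : ℕ) (he : 1 ≤ e) (a : A)
    (ha : (p : A) ^ e * a = 0) :
    ∀ k : ℕ, k ≤ e → (p : A) ^ (e - k) * (ψ^[k] a) = 0 := by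
  intro k
  induction k with
  | zero => simpa using ha
  | succ k ih =>
    intro hk
    have ih' := ih (by omega)
    have hstep : (p : A) * ((p : A) ^ (e - (k+1)) * ψ^[k] a) = 0 := by
      rw [← mul_assoc, ← pow_succ', show e - (k+1) + 1 = e - k by omega]
      exact ih'
    have hz := ThetaAux.psi_eq_zero hp h hstep
    rw [h.psi_mul, ThetaAux.psi_natCast_pow h] at hz
    rw [Function.iterate_succ_apply']
    exact hz
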